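/- arXiv:2406.14487 — 2 statements merged into one kernel-verified Lean document; each statement's English description precedes it below -/
import Mathlib

section
/- Let w be the finite binary word 00100100. Then the critical exponent of w equals 8/3, and for every infinite binary word y one has E(wy) ≥ 3 (indeed both w0 and w1 are 3-powers). In particular there is no y ∈ {0,1}^ω with E(wy) strictly between 8/3 and 3, which disproves the claim of [Critical, Theorem 7]. -/
/-- `u` is a `p/q`-power: `u = x^n ++ y` with `x` nonempty, `y` a prefix of `x`,
`ℓ(u) = p` and `ℓ(x) = q`. -/
def IsPQPower {α : Type*} (u : List α) (p q : ℕ) : Prop :=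
  0 < p ∧ 0 < q ∧ u.length = p ∧
    ∃ (x y : List α) (n : ℕ), x ≠ [] ∧ 0 < n ∧ y <+: x ∧ x.length = q ∧
      u = (List.replicate n x).flatten ++ y

/-- `u` is an `s`-power for the rational `s`. -/
def IsPowerOfExp {α : Type*} (u : List α) (s : ℚ) : Prop :=
  ∃ p q : ℕ, IsPQPower u p q ∧ s = (p : ℚ) / q

/-- the finite word `u` occurs as a (contiguous) subword of the infinite word `w`. -/
def InfOccurs {α : Type*} (u : List α) (w : ℕ → α) : Prop :=
  ∃ i : ℕ, u = (List.range u.length).map fun k => w (i + k)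

/-- the finite word `w` contains an `r`-power. -/
def ContainsPowFin {α : Type*} (w : List α) (r : ℚ) : Prop :=
  ∃ u : List α, u <:+: w ∧ ∃ s : ℚ, r ≤ s ∧ IsPowerOfExp u s

/-- the infinite word `w` contains an `r`-power. -/
def ContainsPowInf {α : Type*} (w : ℕ → α) (r : ℚ) : Prop :=
  ∃ u : List α, InfOccurs u w ∧ ∃ s : ℚ, r ≤ s ∧ IsPowerOfExp u s

open Classical in
/-- critical exponent of a finite word. -/
noncomputable def Efin {α : Type*} (w : List α) : EReal :=
  if w = [] then 0
  else sSup {x : EReal | ∃ r : ℚ, ContainsPowFin w r ∧ x = ((r : ℝ) : EReal)}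

/-- critical exponent of an infinite word. -/
noncomputable def Einf {α : Type*} (w : ℕ → α) : EReal :=
  sSup {x : EReal | ∃ r : ℚ, ContainsPowInf w r ∧ x = ((r : ℝ) : EReal)}

/-- concatenation of a finite and an infinite word. -/
def wordCat {α : Type*} (w : List α) (y : ℕ → α) : ℕ → α :=
  fun n => if h : n < w.length then w[n] else y (n - w.length)

/-- the `k`-th digit of the base-`b` expansion of `x`, choosing for `b`-adic
rationals the expansion whose digits are ultimately `b - 1`. -/
noncomputable def baseDigit (b : ℕ) (x : ℝ) (k : ℕ) : ℕ :=
  if x ≤ 0 then 0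
  else (⌈x * b ^ (k + 1)⌉ - b * ⌈x * b ^ k⌉ + ((b : ℤ) - 1)).toNat

/-- the base-`b` critical exponent function `κ_b`, with the convention `1/∞ = 0`. -/
noncomputable def kappaBase (b : ℕ) (x : ℝ) : ℝ :=
  1 / (Einf (baseDigit b x)).toReal

/-- the `2`-critical exponent function `κ₂`. -/
noncomputable def kappa2 : ℝ → ℝ := kappaBase 2

/-- The Thue–Morse sequence. -/
def tm : ℕ → Fin 2
  | 0 => 0
  | (n + 1) => if (n + 1) % 2 = 0 then tm ((n + 1) / 2) else 1 - tm ((n + 1) / 2)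
decreasing_by all_goals omega

/-- the real number whose binary expansion is the Thue–Morse sequence. -/
noncomputable def xtau : ℝ := ∑' i : ℕ, ((tm i : ℕ) : ℝ) / 2 ^ (i + 1)

/-! The word `00100100 = (001)²00` is an `8/3`-power, and a finite check shows that no factor of
it has a larger exponent. Any extension contains a cube: appending `0` produces `000` at the end,
appending `1` produces `(001)³`. Exponents are computed through periods: `u` is a `p/q`-power
exactly when `|u| = p ≥ q > 0` and `u` has period `q` (`List.HasPeriod`). -/

namespace List

variable {α : Type*}

instance [DecidableEq α] (w : List α) (p : ℕ) : Decidable (w.HasPeriod p) :=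
  inferInstanceAs (Decidable (w <+: w.take p ++ w))

theorem mem_flatMap_tails_inits {u w : List α} : u ∈ w.tails.flatMap inits ↔ u <:+: w := by
  simp only [mem_flatMap, mem_tails, mem_inits, infix_iff_prefix_suffix, and_comm]

theorem flatten_replicate_append_prefix_succ {x y : List α} (hy : y <+: x) (n : ℕ) :
    (replicate n x).flatten ++ y <+: (replicate (n + 1) x).flatten ++ y := by
  rw [replicate_succ', flatten_concat, append_assoc]
  exact (prefix_append_right_inj _).2 (hy.trans (prefix_append x y))

theorem HasPeriod.exists_eq_flatten_replicate_append {q : ℕ} {u : List α}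
    (per : u.HasPeriod q) (hq : 0 < q) (hqu : q ≤ u.length) :
    ∃ x y n, x ≠ [] ∧ 0 < n ∧ y <+: x ∧ x.length = q ∧ u = (replicate n x).flatten ++ y := by
  have hdrop : u.drop q <+: u := per.drop_prefix q
  by_cases hshort : u.length < 2 * q
  · refine ⟨u.take q, u.drop q, 1, ?_, one_pos, ?_, by rw [length_take]; omega, by simp⟩
    · rw [← length_pos_iff, length_take]; omega
    · exact prefix_take_iff.2 ⟨hdrop, by rw [length_drop]; omega⟩
  · obtain ⟨x, y, n, hx, hn, hyx, hxq, hu⟩ :=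
      (per.infix (drop_suffix q u).isInfix).exists_eq_flatten_replicate_append hq
        (by rw [length_drop]; omega)
    have hxu : x = u.take q := by
      have : x <+: u.drop q := by
        obtain ⟨m, rfl⟩ : ∃ m, n = m + 1 := ⟨n - 1, by omega⟩
        rw [hu, replicate_succ, flatten_cons, append_assoc]
        exact prefix_append x _
      rw [prefix_iff_eq_take.1 (this.trans hdrop), hxq]
    refine ⟨x, y, n + 1, hx, n.succ_pos, hyx, hxq, ?_⟩
    rw [replicate_succ, flatten_cons, append_assoc, ← hu, hxu, take_append_drop]
termination_by u.length
decreasing_by rw [length_drop]; omega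

end List

section CriticalExponent

variable {α : Type*}

theorem isPQPower_iff_hasPeriod {u : List α} {p q : ℕ} :
    IsPQPower u p q ↔ 0 < q ∧ q ≤ p ∧ u.length = p ∧ u.HasPeriod q := by
  constructor
  · rintro ⟨-, hq, rfl, x, y, n, -, hn, hyx, rfl, rfl⟩
    obtain ⟨m, rfl⟩ : ∃ m, n = m + 1 := ⟨n - 1, by omega⟩
    have hsplit : (List.replicate (m + 1) x).flatten ++ y =
        x ++ ((List.replicate m x).flatten ++ y) := by
      rw [List.replicate_succ, List.flatten_cons, List.append_assoc]
    refine ⟨hq, by rw [hsplit]; simp, rfl, ?_⟩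
    rw [List.HasPeriod, hsplit, List.take_left, ← hsplit, ← List.append_assoc,
      ← List.flatten_cons, ← List.replicate_succ]
    exact List.flatten_replicate_append_prefix_succ hyx (m + 1)
  · rintro ⟨hq, hqp, rfl, per⟩
    exact ⟨by omega, hq, rfl, per.exists_eq_flatten_replicate_append hq hqp⟩

theorem isPowerOfExp_of_hasPeriod {u : List α} {q : ℕ} (per : u.HasPeriod q) (hq : 0 < q)
    (hqu : q ≤ u.length) : IsPowerOfExp u (u.length / q) :=
  ⟨u.length, q, isPQPower_iff_hasPeriod.2 ⟨hq, hqu, rfl, per⟩, rfl⟩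

theorem Efin_eq_of_isPowerOfExp {w : List α} {r : ℚ} (hw : w ≠ [])
    (hle : ∀ u, u <:+: w → ∀ s, IsPowerOfExp u s → s ≤ r)
    (hr : ∃ u, u <:+: w ∧ IsPowerOfExp u r) : Efin w = ((r : ℝ) : EReal) := by
  rw [Efin, if_neg hw]
  apply le_antisymm
  · refine sSup_le ?_
    rintro _ ⟨r', ⟨u, hu, s, hrs, hs⟩, rfl⟩
    exact EReal.coe_le_coe_iff.2 (by exact_mod_cast hrs.trans (hle u hu s hs))
  · obtain ⟨u, hu, hs⟩ := hr
    exact le_sSup ⟨r, ⟨u, hu, r, le_rfl, hs⟩, rfl⟩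

theorem le_Einf_of_infOccurs {w : ℕ → α} {u : List α} {s : ℚ} (hu : InfOccurs u w)
    (hs : IsPowerOfExp u s) : ((s : ℝ) : EReal) ≤ Einf w :=
  le_sSup ⟨s, ⟨u, hu, s, le_rfl, hs⟩, rfl⟩

end CriticalExponent

theorem le_eight_thirds_of_infix_00100100 (u : List (Fin 2))
    (hu : u <:+: ([0, 0, 1, 0, 0, 1, 0, 0] : List (Fin 2))) (s : ℚ) (hs : IsPowerOfExp u s) :
    s ≤ 8 / 3 := by
  obtain ⟨p, q, hpq, rfl⟩ := hs
  obtain ⟨hq, hqp, rfl, per⟩ := isPQPower_iff_hasPeriod.1 hpq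
  have hlen : u.length ≤ 8 := hu.length_le
  have hcheck : ∀ u ∈ ([0, 0, 1, 0, 0, 1, 0, 0] : List (Fin 2)).tails.flatMap List.inits,
      ∀ q ∈ List.range 9, 0 < q → q ≤ u.length → u.HasPeriod q → 3 * u.length ≤ 8 * q := by
    decide
  have hbound := hcheck u (List.mem_flatMap_tails_inits.2 hu) q (List.mem_range.2 (by omega))
    hq hqp per
  rw [div_le_div_iff₀ (by exact_mod_cast hq) (by norm_num)]
  exact_mod_cast (by omega : u.length * 3 ≤ 8 * q)

theorem three_le_Einf_wordCat_00100100 (y : ℕ → Fin 2) :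
    ((3 : ℝ) : EReal) ≤ Einf (wordCat ([0, 0, 1, 0, 0, 1, 0, 0] : List (Fin 2)) y) := by
  rw [show ((3 : ℝ) : EReal) = (((3 : ℚ) : ℝ) : EReal) by norm_num]
  obtain h0 | h1 : y 0 = 0 ∨ y 0 = 1 := by omega
  · have hpow := isPowerOfExp_of_hasPeriod (u := ([0, 0, 0] : List (Fin 2))) (q := 1)
      (by decide) one_pos (by simp)
    norm_num at hpow
    exact le_Einf_of_infOccurs ⟨6, by simp [wordCat, List.range_succ, h0]⟩ hpow
  · have hpow := isPowerOfExp_of_hasPeriod (u := ([0, 0, 1, 0, 0, 1, 0, 0, 1] : List (Fin 2)))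
      (q := 3) (by decide) (by norm_num) (by simp)
    norm_num at hpow
    exact le_Einf_of_infOccurs ⟨0, by simp [wordCat, List.range_succ, h1]⟩ hpow

theorem stmt_0 :
    Efin ([0, 0, 1, 0, 0, 1, 0, 0] : List (Fin 2)) = (((8 : ℝ) / 3) : EReal) ∧
    (∀ y : ℕ → Fin 2,
      ((3 : ℝ) : EReal) ≤ Einf (wordCat ([0, 0, 1, 0, 0, 1, 0, 0] : List (Fin 2)) y)) ∧
    ¬ ∃ y : ℕ → Fin 2,
      (((8 : ℝ) / 3) : EReal) < Einf (wordCat ([0, 0, 1, 0, 0, 1, 0, 0] : List (Fin 2)) y) ∧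
        Einf (wordCat ([0, 0, 1, 0, 0, 1, 0, 0] : List (Fin 2)) y) < ((3 : ℝ) : EReal) := by
  refine ⟨?_, three_le_Einf_wordCat_00100100,
    fun ⟨y, _, hlt⟩ => (hlt.trans_le (three_le_Einf_wordCat_00100100 y)).false⟩
  have hpow := isPowerOfExp_of_hasPeriod (u := ([0, 0, 1, 0, 0, 1, 0, 0] : List (Fin 2)))
    (q := 3) (by decide) (by norm_num) (by simp)
  norm_num at hpow
  rw [show (((8 : ℝ) / 3) : EReal) = (((8 / 3 : ℚ) : ℝ) : EReal) by
    rw [Rat.cast_div, EReal.coe_div]; norm_cast]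
  exact Efin_eq_of_isPowerOfExp (by simp) le_eight_thirds_of_infix_00100100
    ⟨_, List.infix_rfl, hpow⟩
end

section
/- The 2-critical exponent function κ₂ : [0,1] → [0,1] is upper semi-continuous. -/
/-! If `w` contains an `r`-power then `1 / E(w) ≤ 1 / r`, so `κ_b` is upper semicontinuous at `x`
as soon as every `r`-power with `r < E(w_x)` also occurs in `w_x'` for all `x'` near `x`.
If `x` is not `b`-adic, the first `N` digits are locally constant around `x`, and a given power
occurs in some finite prefix. If `x · b^M` is an integer, every `x'` near `x` has a long constant
run of digits from position `M` on, hence contains arbitrarily large powers. -/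

open Filter Topology

section Powers

variable {α : Type*}

theorem ContainsPowInf.mono {w : ℕ → α} {r s : ℚ} (h : ContainsPowInf w s) (hrs : r ≤ s) :
    ContainsPowInf w r := by
  obtain ⟨u, hu, t, hst, ht⟩ := h
  exact ⟨u, hu, t, hrs.trans hst, ht⟩

theorem containsPowInf_of_forall_eq (w : ℕ → α) (v : α) (i : ℕ) {L : ℕ} (hL : 0 < L)
    (h : ∀ j < L, w (i + j) = v) : ContainsPowInf w L := by
  refine ⟨List.replicate L v, ⟨i, ?_⟩, L, le_rfl, L, 1,
    ⟨hL, one_pos, by simp, [v], [], L, by simp, hL, List.nil_prefix, rfl, ?_⟩, by simp⟩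
  · refine (List.eq_replicate_iff.2 ⟨by simp, ?_⟩).symm
    simp only [List.length_replicate, List.mem_map, List.mem_range]
    rintro _ ⟨j, hj, rfl⟩
    exact h j hj
  · simp

theorem ContainsPowInf.exists_of_eqOn_prefix {w : ℕ → α} {r : ℚ} (h : ContainsPowInf w r) :
    ∃ N, ∀ w' : ℕ → α, (∀ k < N, w' k = w k) → ContainsPowInf w' r := by
  obtain ⟨u, ⟨i, hu⟩, s, hrs, hs⟩ := h
  refine ⟨i + u.length, fun w' hw' => ⟨u, ⟨i, ?_⟩, s, hrs, hs⟩⟩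
  rw [hu, List.length_map, List.length_range]
  exact List.map_congr_left fun k hk => (hw' _ (by have := List.mem_range.1 hk; omega)).symm

theorem le_einf {w : ℕ → α} {r : ℚ} (h : ContainsPowInf w r) : ((r : ℝ) : EReal) ≤ Einf w :=
  le_sSup ⟨r, h, rfl⟩

theorem one_le_einf (w : ℕ → α) : 1 ≤ Einf w := by
  simpa using le_einf (containsPowInf_of_forall_eq w (w 0) 0 one_pos fun j hj => by
    rw [Nat.lt_one_iff.1 hj])

theorem containsPowInf_of_lt_einf {w : ℕ → α} {r : ℚ} (h : ((r : ℝ) : EReal) < Einf w) :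
    ContainsPowInf w r := by
  obtain ⟨_, ⟨s, hs, rfl⟩, hrs⟩ := lt_sSup_iff.1 h
  exact hs.mono (by exact_mod_cast hrs.le)

theorem one_div_toReal_einf_le {w : ℕ → α} {r : ℚ} (hr : 0 < r) (h : ContainsPowInf w r) :
    1 / (Einf w).toReal ≤ 1 / r := by
  have hE := le_einf h
  generalize Einf w = E at hE ⊢
  induction E using EReal.rec with
  | bot => exact absurd hE (by simp)
  | top =>
    rw [EReal.toReal_top, div_zero]
    positivity
  | coe e => exact one_div_le_one_div_of_le (by exact_mod_cast hr) (by exact_mod_cast hE)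

theorem upperSemicontinuousAt_one_div_toReal_einf {X : Type*} [TopologicalSpace X]
    {f : X → ℕ → α} {x : X}
    (h : ∀ r : ℚ, ((r : ℝ) : EReal) < Einf (f x) → ∀ᶠ x' in 𝓝 x, ContainsPowInf (f x') r) :
    UpperSemicontinuousAt (fun x => 1 / (Einf (f x)).toReal) x := by
  intro y hy
  have hy₀ : 0 < y := hy.trans_le' <| one_div_nonneg.2 <|
    EReal.toReal_nonneg (zero_le_one.trans (one_le_einf _))
  have hyE : ((1 / y : ℝ) : EReal) < Einf (f x) := by
    have hE := one_le_einf (f x)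
    simp only at hy
    generalize Einf (f x) = E at hE hy ⊢
    induction E using EReal.rec with
    | bot => exact absurd hE (not_le.2 (EReal.bot_lt_coe 1))
    | top => exact EReal.coe_lt_top _
    | coe e =>
      have he : (1 : ℝ) ≤ e := by exact_mod_cast hE
      exact EReal.coe_lt_coe_iff.2 ((one_div_lt hy₀ (by linarith)).2 (by simpa using hy))
  obtain ⟨r, hyr, hrE⟩ := EReal.lt_iff_exists_rat_btwn.1 hyE
  have hr : (1 / y : ℝ) < r := by exact_mod_cast hyr
  have hr₀ : (0 : ℝ) < r := (one_div_pos.2 hy₀).trans hr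
  filter_upwards [h r hrE] with x' hx'
  calc 1 / (Einf (f x')).toReal ≤ 1 / (r : ℝ) :=
        one_div_toReal_einf_le (by exact_mod_cast hr₀) hx'
    _ < y := (one_div_lt hr₀ hy₀).2 hr

end Powers

section Digits

theorem Int.ceil_eq_add_of_ceil_mul_eq {y : ℝ} {n : ℕ} (hn : 0 < n) {a e : ℤ} (he₀ : 0 ≤ e)
    (he₁ : e ≤ 1) (h : ⌈y * n⌉ = a * n + e) : ⌈y⌉ = a + e := by
  rw [Int.ceil_eq_iff] at h ⊢
  have hn' : (1 : ℝ) ≤ n := by exact_mod_cast hn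
  have he₀' : (0 : ℝ) ≤ e := by exact_mod_cast he₀
  have he₁' : (e : ℝ) ≤ 1 := by exact_mod_cast he₁
  push_cast at h ⊢
  constructor <;> nlinarith [h.1, h.2]

variable {b : ℕ}

theorem baseDigit_of_nonpos {x : ℝ} (hx : x ≤ 0) (k : ℕ) : baseDigit b x k = 0 := by
  rw [baseDigit, if_pos hx]

theorem baseDigit_eq_of_ceil_mul_pow_eq (hb : 0 < b) {x : ℝ} (hx : 0 < x) {M N : ℕ} {c e : ℤ}
    (he₀ : 0 ≤ e) (he₁ : e ≤ 1) (h : ⌈x * b ^ N⌉ = c * b ^ (N - M) + e) {k : ℕ} (hMk : M ≤ k)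
    (hkN : k < N) : baseDigit b x k = ((1 - e) * (b - 1)).toNat := by
  have hceil : ∀ j, M ≤ j → j ≤ N → ⌈x * b ^ j⌉ = c * b ^ (j - M) + e := by
    intro j hMj hjN
    refine Int.ceil_eq_add_of_ceil_mul_eq (n := b ^ (N - j)) (by positivity) he₀ he₁ ?_
    have hN : N = j + (N - j) := by omega
    have hNM : N - M = j - M + (N - j) := by omega
    push_cast
    rwa [mul_assoc, ← pow_add, ← hN, mul_assoc, ← pow_add, ← hNM]
  rw [baseDigit, if_neg hx.not_ge, hceil k hMk hkN.le, hceil (k + 1) (by omega) hkN,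
    show k + 1 - M = k - M + 1 by omega]
  congr 1
  ring

theorem eventually_baseDigit_const_of_mul_pow_eq_intCast (hb : 0 < b) {x : ℝ} {M : ℕ} {c : ℤ}
    (hc : x * b ^ M = c) (L : ℕ) :
    ∀ᶠ x' in 𝓝 x, ∃ v, ∀ j < L, baseDigit b x' (M + j) = v := by
  have hx : x * b ^ (M + L) = ((c * b ^ L : ℤ) : ℝ) := by
    rw [pow_add, ← mul_assoc, hc]
    push_cast
    ring
  have hnear := ((continuous_mul_const ((b : ℝ) ^ (M + L))).tendsto x).eventually
    (eventually_abs_sub_lt _ one_pos)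
  filter_upwards [hnear] with x' hx'
  rcases le_or_gt x' 0 with hx'₀ | hx'₀
  · exact ⟨0, fun j _ => baseDigit_of_nonpos hx'₀ _⟩
  rw [hx, abs_sub_lt_iff] at hx'
  set e := ⌈x' * b ^ (M + L)⌉ - c * b ^ L
  have he₀ : 0 ≤ e := by
    have : c * b ^ L ≤ ⌈x' * b ^ (M + L)⌉ := Int.le_ceil_iff.2 (by push_cast at hx' ⊢; linarith)
    omega
  have he₁ : e ≤ 1 := by
    have : ⌈x' * b ^ (M + L)⌉ ≤ c * b ^ L + 1 := Int.ceil_le.2 (by push_cast at hx' ⊢; linarith)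
    omega
  -- `e = 0` for `x'` just left of `x` (a run of `b - 1`s), `e = 1` just right of it (a run of `0`s)
  refine ⟨((1 - e) * (b - 1)).toNat, fun j hj =>
    baseDigit_eq_of_ceil_mul_pow_eq hb hx'₀ (M := M) (N := M + L) (c := c) he₀ he₁ ?_
      (by omega) (by omega)⟩
  rw [Nat.add_sub_cancel_left]
  omega

theorem eventually_ceil_eq {z : ℝ} (hz : ∀ c : ℤ, z ≠ c) : ∀ᶠ z' in 𝓝 z, ⌈z'⌉ = ⌈z⌉ := by
  have hlt : z < ⌈z⌉ := (Int.le_ceil z).lt_of_ne (hz _)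
  have hgt : (⌈z⌉ : ℝ) - 1 < z := by linarith [Int.ceil_lt_add_one z]
  filter_upwards [Ioo_mem_nhds hgt hlt] with z' hz'
  exact Int.ceil_eq_on_Ioc _ _ ⟨hz'.1, hz'.2.le⟩

theorem eventually_baseDigit_eq_of_forall_mul_pow_ne {x : ℝ}
    (hx : ∀ (M : ℕ) (c : ℤ), x * b ^ M ≠ c) (N : ℕ) :
    ∀ᶠ x' in 𝓝 x, ∀ k < N, baseDigit b x' k = baseDigit b x k := by
  rcases lt_or_gt_of_ne (by simpa using hx 0 0 : x ≠ 0) with hx₀ | hx₀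
  · filter_upwards [eventually_lt_nhds hx₀] with x' hx' k _
    rw [baseDigit_of_nonpos hx'.le, baseDigit_of_nonpos hx₀.le]
  have hceil : ∀ j : ℕ, ∀ᶠ x' in 𝓝 x, ⌈x' * (b : ℝ) ^ j⌉ = ⌈x * b ^ j⌉ := fun j =>
    ((continuous_mul_const ((b : ℝ) ^ j)).tendsto x).eventually (eventually_ceil_eq (hx j))
  filter_upwards [eventually_gt_nhds hx₀,
    (Finset.range (N + 1)).eventually_all.2 fun j _ => hceil j] with x' hx' hx'N k hk
  rw [baseDigit, baseDigit, if_neg hx'.not_ge, if_neg hx₀.not_ge,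
    hx'N k (Finset.mem_range.2 (by omega)), hx'N (k + 1) (Finset.mem_range.2 (by omega))]

end Digits

theorem upperSemicontinuous_kappaBase {b : ℕ} (hb : 0 < b) :
    UpperSemicontinuous (kappaBase b) := by
  intro x
  refine upperSemicontinuousAt_one_div_toReal_einf fun r hr => ?_
  by_cases hadic : ∃ (M : ℕ) (c : ℤ), x * b ^ M = c
  · obtain ⟨M, c, hc⟩ := hadic
    filter_upwards [eventually_baseDigit_const_of_mul_pow_eq_intCast hb hc (⌈r⌉₊ + 1)]
      with x' ⟨v, hv⟩
    refine (containsPowInf_of_forall_eq _ v M (Nat.succ_pos _) hv).mono ?_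
    push_cast
    linarith [Nat.le_ceil r]
  · push Not at hadic
    obtain ⟨N, hN⟩ := (containsPowInf_of_lt_einf hr).exists_of_eqOn_prefix
    filter_upwards [eventually_baseDigit_eq_of_forall_mul_pow_ne hadic N] with x' hx'
    exact hN _ hx'

theorem stmt_3 : UpperSemicontinuousOn kappa2 (Set.Icc (0 : ℝ) 1) :=
  (upperSemicontinuous_kappaBase two_pos).upperSemicontinuousOn _
end
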